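/- arXiv:1711.08625 — 2 statements merged into one kernel-verified Lean document; each statement's English description precedes it below -/
import Mathlib

section
/- Let p be an odd prime, M = Qd(p), and P = V⟨α⟩ its Sylow p-subgroup as below. If Q is a subgroup of V of order p that is fully F_P(M)-normalized, then Q = Z(P), the center of P (which is the subgroup of V generated by ((1,0), I)). -/
/-- `SL(2, p)`. -/
abbrev SL2 (p : ℕ) := Matrix.SpecialLinearGroup (Fin 2) (ZMod p)

/-- The additive automorphism of `ℤ/p × ℤ/p` (as `Fin 2 → ZMod p`) given by a
matrix in `SL(2, p)` acting by matrix–vector multiplication. -/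
def sl2AddAut (p : ℕ) (A : SL2 p) : AddAut (Fin 2 → ZMod p) where
  toFun v := (A : Matrix (Fin 2) (Fin 2) (ZMod p)).mulVec v
  invFun v := ((A⁻¹ : SL2 p) : Matrix (Fin 2) (Fin 2) (ZMod p)).mulVec v
  left_inv v := by
    show (_ : Matrix (Fin 2) (Fin 2) (ZMod p)).mulVec (Matrix.mulVec _ v) = v
    rw [Matrix.mulVec_mulVec, ← Matrix.SpecialLinearGroup.coe_mul, inv_mul_cancel,
      Matrix.SpecialLinearGroup.coe_one, Matrix.one_mulVec]
  right_inv v := by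
    show (_ : Matrix (Fin 2) (Fin 2) (ZMod p)).mulVec (Matrix.mulVec _ v) = v
    rw [Matrix.mulVec_mulVec, ← Matrix.SpecialLinearGroup.coe_mul, mul_inv_cancel,
      Matrix.SpecialLinearGroup.coe_one, Matrix.one_mulVec]
  map_add' v w := Matrix.mulVec_add _ v w

/-- The action of `SL(2, p)` on `ℤ/p × ℤ/p` as a homomorphism into the
(multiplicatively written) automorphism group. -/
def sl2Phi (p : ℕ) : SL2 p →* MulAut (Multiplicative (Fin 2 → ZMod p)) where
  toFun A := AddEquiv.toMultiplicative (sl2AddAut p A)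
  map_one' := by
    ext v
    simp [sl2AddAut]
  map_mul' A B := by
    ext v
    simp [sl2AddAut, ← Matrix.mulVec_mulVec]

/-- The quadratic group `Qd(p) = (ℤ/p × ℤ/p) ⋊ SL(2, p)`. -/
abbrev Qd (p : ℕ) := SemidirectProduct (Multiplicative (Fin 2 → ZMod p)) (SL2 p) (sl2Phi p)

/-- The normal subgroup `V = ℤ/p × ℤ/p` of `Qd(p)`. -/
def QdV (p : ℕ) : Subgroup (Qd p) :=
  (SemidirectProduct.inl : Multiplicative (Fin 2 → ZMod p) →* Qd p).range

/-- The unipotent matrix `α = [[1,1],[0,1]] ∈ SL(2,p)`. -/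
def alphaSL (p : ℕ) : SL2 p :=
  ⟨!![1, 1; 0, 1], by simp [Matrix.det_fin_two_of]⟩

/-- The element `α` of `Qd(p)`. -/
def Qdalpha (p : ℕ) : Qd p := SemidirectProduct.inr (alphaSL p)

/-- The Sylow `p`-subgroup `P = V⟨α⟩` of `Qd(p)`. -/
def QdP (p : ℕ) : Subgroup (Qd p) := QdV p ⊔ Subgroup.zpowers (Qdalpha p)

/-- The central element `t = ((1,0), I)` of `P`. -/
def Qdt (p : ℕ) : Qd p := SemidirectProduct.inl (Multiplicative.ofAdd ![1, 0])

/-- `Q ≤ P` is fully `F_P(M)`-normalized: `|N_P(mQm⁻¹)| ≤ |N_P(Q)|` for every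
`m ∈ M` with `mQm⁻¹ ≤ P`. -/
def IsFullyNormalized {M : Type*} [Group M] (P Q : Subgroup M) : Prop :=
  ∀ m : M, Subgroup.map (MulAut.conj m).toMonoidHom Q ≤ P →
    Nat.card ↥(P ⊓ Subgroup.normalizer ((Subgroup.map (MulAut.conj m).toMonoidHom Q : Set M))) ≤
      Nat.card ↥(P ⊓ Subgroup.normalizer (Q : Set M))

/-!
Write `Q = ⟨v⟩` with `0 ≠ v ∈ V = 𝔽_p²`. Since `SL(2,p)` acts transitively on nonzero
vectors, `Q` is conjugate in `Qd(p)` to `⟨t⟩ = Z(P)`, whose normalizer in `P` is all of `P`.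
Full normalization of `Q` then forces `P ≤ N(Q)`; in particular `α` normalizes `⟨v⟩`, so `v`
is an eigenvector of the unipotent matrix `α`, i.e. a multiple of `(1, 0)`.
-/

open Matrix SemidirectProduct Subgroup Multiplicative

instance SemidirectProduct.instFinite {N G : Type*} [Group N] [Group G] {φ : G →* MulAut N}
    [Finite N] [Finite G] : Finite (N ⋊[φ] G) :=
  Finite.of_equiv _ equivProd.symm

theorem SemidirectProduct.mul_inl_mul_inv {N G : Type*} [CommGroup N] [Group G]
    {φ : G →* MulAut N} (x : N ⋊[φ] G) (n : N) : x * inl n * x⁻¹ = inl (φ x.right n) := by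
  ext <;> simp [mul_comm]

theorem Matrix.SpecialLinearGroup.exists_mulVec_eq_one_zero {K : Type*} [Field K]
    {v : Fin 2 → K} (hv : v ≠ 0) :
    ∃ B : Matrix.SpecialLinearGroup (Fin 2) K,
      (B : Matrix (Fin 2) (Fin 2) K) *ᵥ v = ![1, 0] := by
  obtain ⟨i, hi⟩ : ∃ i, v i ≠ 0 := by
    by_contra! h
    exact hv (funext h)
  -- the first row is any `r` with `r ⬝ᵥ v = 1`, the second row `(-v 1, v 0)` kills `v`
  set r : Fin 2 → K := Pi.single i (v i)⁻¹
  have hr : v ⬝ᵥ r = 1 := by simp [r, hi]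
  rw [dotProduct, Fin.sum_univ_two] at hr
  refine ⟨⟨!![r 0, r 1; -v 1, v 0], by rw [det_fin_two_of]; linear_combination hr⟩, ?_⟩
  ext j
  fin_cases j <;> simp [mulVec, dotProduct, hr, mul_comm]

theorem IsFullyNormalized.le_normalizer {M : Type*} [Group M] {P Q R : Subgroup M} [Finite P]
    (hQ : IsFullyNormalized P Q) {m : M} (hm : map (MulAut.conj m).toMonoidHom Q = R)
    (hRP : R ≤ P) (hPR : P ≤ normalizer (R : Set M)) : P ≤ normalizer (Q : Set M) := by
  have hcard := hQ m (hm ▸ hRP)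
  rw [hm, inf_eq_left.mpr hPR] at hcard
  exact inf_eq_left.mp (eq_of_le_of_card_ge inf_le_left hcard)

section Qd

variable (p : ℕ)

theorem Qd.mul_inl_mul_inv (x : Qd p) (v : Fin 2 → ZMod p) :
    x * inl (ofAdd v) * x⁻¹ = inl (ofAdd ((x.right : Matrix (Fin 2) (Fin 2) (ZMod p)) *ᵥ v)) :=
  SemidirectProduct.mul_inl_mul_inv x (ofAdd v)

theorem alphaSL_mulVec (v : Fin 2 → ZMod p) :
    (alphaSL p : Matrix (Fin 2) (Fin 2) (ZMod p)) *ᵥ v = ![v 0 + v 1, v 1] := by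
  ext j
  fin_cases j <;> simp [alphaSL, mulVec, dotProduct]

theorem alphaSL_pow_mulVec (n : ℕ) (v : Fin 2 → ZMod p) :
    ((alphaSL p ^ n : SL2 p) : Matrix (Fin 2) (Fin 2) (ZMod p)) *ᵥ v = ![v 0 + n * v 1, v 1] := by
  induction n generalizing v with
  | zero => ext j; fin_cases j <;> simp
  | succ n ih =>
    rw [Matrix.SpecialLinearGroup.coe_pow] at ih ⊢
    rw [pow_succ, ← mulVec_mulVec, alphaSL_mulVec, ih]
    ext j
    fin_cases j <;> simp [add_mul, add_assoc, add_comm]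

theorem apply_one_eq_zero_of_alphaSL_mulVec_eq_smul [Fact p.Prime] {v : Fin 2 → ZMod p}
    {c : ZMod p} (h : (alphaSL p : Matrix (Fin 2) (Fin 2) (ZMod p)) *ᵥ v = c • v) :
    v 1 = 0 := by
  rw [alphaSL_mulVec] at h
  have h0 : v 0 + v 1 = c * v 0 := by simpa using congrFun h 0
  have h1 : v 1 = c * v 1 := by simpa using congrFun h 1
  by_contra hv1
  have hc : c = 1 := by
    have : (c - 1) * v 1 = 0 := by linear_combination -h1
    linear_combination (mul_eq_zero.mp this).resolve_right hv1
  exact hv1 (by linear_combination h0 + v 0 * hc)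

theorem mem_QdV_iff {x : Qd p} : x ∈ QdV p ↔ x.right = 1 := by
  rw [QdV, range_inl_eq_ker_rightHom, MonoidHom.mem_ker, rightHom_eq_right]

theorem QdV_le_QdP : QdV p ≤ QdP p :=
  le_sup_left

theorem Qdt_mem_QdP : Qdt p ∈ QdP p :=
  QdV_le_QdP p ⟨_, rfl⟩

theorem Qdalpha_mem_QdP : Qdalpha p ∈ QdP p :=
  le_sup_right (a := QdV p) (mem_zpowers _)

theorem exists_right_eq_alphaSL_pow [NeZero p] {x : Qd p} (hx : x ∈ QdP p) :
    ∃ n : ℕ, x.right = alphaSL p ^ n := by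
  have hP : QdP p ≤ (zpowers (alphaSL p)).comap rightHom := by
    refine sup_le (fun y hy => ?_) (zpowers_le.mpr ?_)
    · simp [(mem_QdV_iff p).mp hy]
    · simp [Qdalpha]
  obtain ⟨n, hn⟩ := mem_powers_iff_mem_zpowers.mpr (hP hx)
  exact ⟨n, hn.symm⟩

theorem mem_zpowers_inl_ofAdd_iff {w : Fin 2 → ZMod p} {x : Qd p} :
    x ∈ zpowers (inl (ofAdd w)) ↔ ∃ c : ZMod p, inl (ofAdd (c • w)) = x := by
  rw [← MonoidHom.map_zpowers, mem_map]
  constructor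
  · rintro ⟨_, ⟨k, rfl⟩, rfl⟩
    exact ⟨k, by rw [Int.cast_smul_eq_zsmul, ofAdd_zsmul]⟩
  · rintro ⟨c, rfl⟩
    refine ⟨_, ⟨(c.cast : ℤ), rfl⟩, ?_⟩
    dsimp only
    rw [← ofAdd_zsmul, ← Int.cast_smul_eq_zsmul (ZMod p), ZMod.intCast_zmod_cast]

theorem inl_ofAdd_mem_zpowers_Qdt {w : Fin 2 → ZMod p} (hw : w 1 = 0) :
    inl (ofAdd w) ∈ zpowers (Qdt p) := by
  refine mem_zpowers_inl_ofAdd_iff p |>.mpr ⟨w 0, ?_⟩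
  congr
  ext j
  fin_cases j <;> simp [hw]

theorem zpowers_inl_ofAdd_eq_zpowers_Qdt [Fact p.Prime] {v : Fin 2 → ZMod p} (hv : v ≠ 0)
    (hv1 : v 1 = 0) : zpowers (inl (ofAdd v)) = zpowers (Qdt p) := by
  have hv0 : v 0 ≠ 0 := fun hv0 => hv (by ext j; fin_cases j <;> simp [hv0, hv1])
  refine le_antisymm (zpowers_le.mpr (inl_ofAdd_mem_zpowers_Qdt p hv1))
    (zpowers_le.mpr (mem_zpowers_inl_ofAdd_iff p |>.mpr ⟨(v 0)⁻¹, ?_⟩))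
  congr
  ext j
  fin_cases j <;> simp [hv0, hv1]

theorem apply_one_eq_zero_of_Qdalpha_conj_mem [Fact p.Prime] {v : Fin 2 → ZMod p}
    (h : Qdalpha p * inl (ofAdd v) * (Qdalpha p)⁻¹ ∈ zpowers (inl (ofAdd v))) : v 1 = 0 := by
  obtain ⟨c, hc⟩ := (mem_zpowers_inl_ofAdd_iff p).mp h
  rw [Qd.mul_inl_mul_inv] at hc
  exact apply_one_eq_zero_of_alphaSL_mulVec_eq_smul p (ofAdd.injective (inl_injective hc)).symm

theorem mul_Qdt_mul_inv [NeZero p] {x : Qd p} (hx : x ∈ QdP p) : x * Qdt p * x⁻¹ = Qdt p := by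
  obtain ⟨n, hn⟩ := exists_right_eq_alphaSL_pow p hx
  rw [Qdt, Qd.mul_inl_mul_inv, hn, alphaSL_pow_mulVec]
  congr 2
  ext j
  fin_cases j <;> simp

theorem QdP_le_normalizer_zpowers_Qdt [NeZero p] :
    QdP p ≤ normalizer (zpowers (Qdt p) : Set (Qd p)) := by
  have ht : Qdt p ∈ centralizer (QdP p : Set (Qd p)) := fun x hx =>
    mul_inv_eq_iff_eq_mul.mp (mul_Qdt_mul_inv p hx)
  exact (le_centralizer_iff.mp (zpowers_le.mpr ht)).trans (centralizer_le_normalizer _)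

theorem alphaSL_pow_eq_one_of_cast_eq_zero {n : ℕ} (hn : (n : ZMod p) = 0) :
    alphaSL p ^ n = 1 := by
  refine Subtype.ext (ext_iff_mulVec.mpr fun v => ?_)
  rw [alphaSL_pow_mulVec, hn]
  ext j
  fin_cases j <;> simp

theorem map_subtype_center_QdP [Fact p.Prime] :
    map (QdP p).subtype (center (QdP p)) = zpowers (Qdt p) := by
  refine le_antisymm ?_ (zpowers_le.mpr ⟨⟨Qdt p, Qdt_mem_QdP p⟩, ?_, rfl⟩)
  · rintro _ ⟨⟨x, hxP⟩, hx, rfl⟩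
    have hcomm : ∀ y ∈ QdP p, Commute y x := fun y hy =>
      congrArg Subtype.val (mem_center_iff.mp hx ⟨y, hy⟩)
    -- commuting with `(0, 1)` kills the `α`-component of `x`;
    -- commuting with `α` then puts `x` in `⟨t⟩`
    have hright : x.right = 1 := by
      obtain ⟨n, hn⟩ := exists_right_eq_alphaSL_pow p hxP
      have h := (hcomm _ (QdV_le_QdP p ⟨ofAdd ![0, 1], rfl⟩)).symm.mul_inv_cancel
      rw [Qd.mul_inl_mul_inv, hn, alphaSL_pow_mulVec] at h
      have hn0 : (n : ZMod p) = 0 := by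
        simpa using congrFun (ofAdd.injective (inl_injective h)) 0
      rw [hn, alphaSL_pow_eq_one_of_cast_eq_zero p hn0]
    obtain ⟨l, rfl⟩ : x ∈ QdV p := (mem_QdV_iff p).mpr hright
    refine inl_ofAdd_mem_zpowers_Qdt p (w := toAdd l) (apply_one_eq_zero_of_Qdalpha_conj_mem p ?_)
    rw [ofAdd_toAdd, (hcomm _ (Qdalpha_mem_QdP p)).mul_inv_cancel]
    exact mem_zpowers _
  · exact mem_center_iff.mpr fun y =>
      Subtype.ext (mul_inv_eq_iff_eq_mul.mp (mul_Qdt_mul_inv p y.2))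

theorem exists_eq_zpowers_inl_ofAdd [Fact p.Prime] {Q : Subgroup (Qd p)} (hQV : Q ≤ QdV p)
    (hQ : Nat.card Q = p) : ∃ v ≠ 0, Q = zpowers (inl (ofAdd v)) := by
  have : IsCyclic Q := isCyclic_of_prime_card hQ
  obtain ⟨g, rfl⟩ := (Q.isCyclic_iff_exists_zpowers_eq_top).mp this
  obtain ⟨l, rfl⟩ := hQV (mem_zpowers g)
  refine ⟨toAdd l, fun hl => ?_, rfl⟩
  rw [toAdd_eq_zero.mp hl, map_one, zpowers_one_eq_bot, card_bot] at hQ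
  exact (Fact.out : p.Prime).one_lt.ne hQ

theorem exists_map_conj_eq_zpowers_Qdt [Fact p.Prime] {v : Fin 2 → ZMod p} (hv : v ≠ 0) :
    ∃ m : Qd p, map (MulAut.conj m).toMonoidHom (zpowers (inl (ofAdd v))) = zpowers (Qdt p) := by
  obtain ⟨B, hB⟩ := Matrix.SpecialLinearGroup.exists_mulVec_eq_one_zero hv
  refine ⟨inr B, ?_⟩
  rw [MonoidHom.map_zpowers]
  congr 1
  exact (Qd.mul_inl_mul_inv p (inr B) v).trans (by rw [right_inr, hB, Qdt])

end Qd

theorem statement14_general (p : ℕ) [Fact p.Prime]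
    (Q : Subgroup (Qd p)) (hQV : Q ≤ QdV p) (hQcard : Nat.card Q = p)
    (hfn : IsFullyNormalized (QdP p) Q) :
    Q = Subgroup.zpowers (Qdt p) ∧
      Subgroup.map (QdP p).subtype (Subgroup.center ↥(QdP p)) = Subgroup.zpowers (Qdt p) := by
  refine ⟨?_, map_subtype_center_QdP p⟩
  obtain ⟨v, hv, rfl⟩ := exists_eq_zpowers_inl_ofAdd p hQV hQcard
  obtain ⟨m, hm⟩ := exists_map_conj_eq_zpowers_Qdt p hv
  have hα := hfn.le_normalizer hm (zpowers_le.mpr (Qdt_mem_QdP p))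
    (QdP_le_normalizer_zpowers_Qdt p) (Qdalpha_mem_QdP p)
  have hv1 := apply_one_eq_zero_of_Qdalpha_conj_mem p
    ((mem_normalizer_iff.mp hα _).mp (mem_zpowers _))
  exact zpowers_inl_ofAdd_eq_zpowers_Qdt p hv hv1

/-- for an odd prime `p`, every fully `F_P(Qd(p))`-normalized subgroup
`Q ≤ V` of order `p` equals the center `Z(P)` of `P`, which is the subgroup of `V`
generated by `((1,0), I)`. -/
theorem statement14 (p : ℕ) [Fact p.Prime] (hodd : Odd p)
    (Q : Subgroup (Qd p)) (hQV : Q ≤ QdV p) (hQcard : Nat.card Q = p)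
    (hfn : IsFullyNormalized (QdP p) Q) :
    Q = Subgroup.zpowers (Qdt p) ∧
      Subgroup.map (QdP p).subtype (Subgroup.center ↥(QdP p)) = Subgroup.zpowers (Qdt p) :=
  statement14_general p Q hQV hQcard hfn
end

section
/- Let n ≥ 3 be an integer and M a finite group of order 3·2^n such that every normal subgroup of M of odd order is trivial and a Sylow 2-subgroup P of M is not normal in M. Let G = Park(M,P) be Park's group and ι : M → G Park's embedding. If Q is a subgroup of P contained in the normal core of P in M and the centralizer C_M(Q) is a 2-group, then the centralizer C_G(ι(Q)) is a 2-group. -/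
/-- Park's group `Park(M, P)`: the group of bijections of `M` commuting with the
right multiplication action of `P`. -/
def parkGroup (M : Type*) [Group M] (P : Subgroup M) : Subgroup (Equiv.Perm M) where
  carrier := {f : Equiv.Perm M | ∀ (m u : M), u ∈ P → f (m * u) = f m * u}
  one_mem' := by intro m u _; rfl
  mul_mem' := by
    intro f g hf hg m u hu
    simp only [Equiv.Perm.mul_apply]
    rw [hg m u hu, hf _ u hu]
  inv_mem' := by
    intro f hf m u hu
    apply f.injective
    rw [hf _ u hu]
    simp

/-- Park's embedding of `M` into `Park(M, P)`, sending `m` to left translation by `m`. -/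
def parkEmbed (M : Type*) [Group M] (P : Subgroup M) : M →* ↥(parkGroup M P) where
  toFun m := ⟨Equiv.mulLeft m, fun x u _ => by simp [mul_assoc]⟩
  map_one' := by
    apply Subtype.ext
    ext x
    simp
  map_mul' m n := by
    apply Subtype.ext
    ext x
    simp [mul_assoc]

/-- `P` is a Sylow `p`-subgroup of a subgroup `H` of `G`. -/
def IsSylowIn (p : ℕ) {G : Type*} [Group G] (H P : Subgroup G) : Prop :=
  P ≤ H ∧ IsPGroup p P ∧ ∀ Q : Subgroup G, Q ≤ H → IsPGroup p Q → P ≤ Q → Q = P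

/-!
An element `g` of Park's group permutes the cosets `M ⧸ P` by `xP ↦ g(x)P`. If `g` centralizes
`ι(Q)` with `Q` inside the core of `P`, then `g(x)x⁻¹` centralizes `Q`, so `g` moves every coset
within its orbit under the `2`-group `C_M(Q)`. Since `|M ⧸ P| = 3`, these orbits have at most two
points, and a `g` of odd order must fix every coset. Then `g(x) = xu` with `u ∈ P`, so
`gʲ(x) = xuʲ` and `g ^ |P| = 1`: the order of `g` is odd and a power of `2`, hence `g = 1`.
So `C_G(ι(Q))` has no nontrivial element of odd order.
-/

open MulAction Subgroup

namespace parkGroup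

variable {M : Type*} [Group M] {P : Subgroup M}

theorem apply_mul_of_mem (f : parkGroup M P) (m : M) {u : M} (hu : u ∈ P) :
    (f : Equiv.Perm M) (m * u) = (f : Equiv.Perm M) m * u :=
  f.2 m u hu

theorem inv_mul_mem_iff (f : parkGroup M P) (x y : M) :
    ((f : Equiv.Perm M) x)⁻¹ * (f : Equiv.Perm M) y ∈ P ↔ x⁻¹ * y ∈ P := by
  suffices h : ∀ (g : parkGroup M P) (x y : M), x⁻¹ * y ∈ P →
      ((g : Equiv.Perm M) x)⁻¹ * (g : Equiv.Perm M) y ∈ P from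
    ⟨fun hf => by simpa using h f⁻¹ _ _ hf, h f x y⟩
  intro g x y hxy
  rw [show y = x * (x⁻¹ * y) by group, apply_mul_of_mem g x hxy]
  simpa using hxy

def cosetPerm : parkGroup M P →* Equiv.Perm (M ⧸ P) where
  toFun f := Quotient.congr (f : Equiv.Perm M) fun x y => by
    rw [QuotientGroup.leftRel_apply, QuotientGroup.leftRel_apply, inv_mul_mem_iff]
  map_one' := by ext ⟨x⟩; rfl
  map_mul' f g := by ext ⟨x⟩; rfl

theorem cosetPerm_mk (f : parkGroup M P) (x : M) :
    cosetPerm f (x : M ⧸ P) = ((f : Equiv.Perm M) x : M ⧸ P) :=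
  rfl

theorem pow_apply_eq_mul_pow (f : parkGroup M P) {x : M}
    (hx : x⁻¹ * (f : Equiv.Perm M) x ∈ P) (j : ℕ) :
    ((f ^ j : parkGroup M P) : Equiv.Perm M) x = x * (x⁻¹ * (f : Equiv.Perm M) x) ^ j := by
  induction j with
  | zero => simp
  | succ j ih =>
    rw [pow_succ', Subgroup.coe_mul, Equiv.Perm.mul_apply, ih,
      apply_mul_of_mem f x (P.pow_mem hx j), pow_succ', ← mul_assoc, mul_inv_cancel_left]

theorem pow_card_eq_one_of_cosetPerm_eq_one [Finite P] {f : parkGroup M P}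
    (hf : cosetPerm f = 1) : f ^ Nat.card P = 1 := by
  ext x
  have hx : x⁻¹ * (f : Equiv.Perm M) x ∈ P :=
    QuotientGroup.eq.mp (congrArg (· (x : M ⧸ P)) hf).symm
  have hpow : (x⁻¹ * (f : Equiv.Perm M) x) ^ Nat.card P = 1 :=
    congrArg Subtype.val (pow_card_eq_one' (x := (⟨_, hx⟩ : P)))
  rw [pow_apply_eq_mul_pow f hx, hpow, mul_one]
  rfl

theorem mul_inv_mem_centralizer {Q : Subgroup M} (hQ : Q ≤ P.normalCore) {g : parkGroup M P}
    (hg : g ∈ centralizer (Q.map (parkEmbed M P) : Set (parkGroup M P))) (x : M) :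
    (g : Equiv.Perm M) x * x⁻¹ ∈ centralizer (Q : Set M) := by
  rw [mem_centralizer_iff]
  intro q hq
  have hconj : x⁻¹ * q * x ∈ P := by simpa using hQ hq x⁻¹
  have hcomm : (g : Equiv.Perm M) (q * x) = q * (g : Equiv.Perm M) x := by
    have := congrArg (fun h : parkGroup M P => (h : Equiv.Perm M) x)
      (mem_centralizer_iff.mp hg _ ⟨q, hq, rfl⟩)
    simpa [parkEmbed] using this.symm
  rw [show q * x = x * (x⁻¹ * q * x) by group, apply_mul_of_mem g x hconj] at hcomm
  calc q * ((g : Equiv.Perm M) x * x⁻¹) = q * (g : Equiv.Perm M) x * x⁻¹ := by group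
    _ = (g : Equiv.Perm M) x * x⁻¹ * q := by rw [← hcomm]; group

theorem cosetPerm_mem_orbit_centralizer {Q : Subgroup M} (hQ : Q ≤ P.normalCore)
    {g : parkGroup M P} (hg : g ∈ centralizer (Q.map (parkEmbed M P) : Set (parkGroup M P)))
    (y : M ⧸ P) : cosetPerm g y ∈ orbit (centralizer (Q : Set M)) y := by
  induction y using QuotientGroup.induction_on with | H x => ?_
  refine ⟨⟨_, mul_inv_mem_centralizer hQ hg x⟩, ?_⟩
  change ((_ : M) • (x : M ⧸ P)) = _
  rw [MulAction.Quotient.smul_mk, cosetPerm_mk]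
  simp

end parkGroup

section OrbitCounting

variable {H X : Type*} [Group H] [MulAction H X]

theorem Equiv.Perm.pow_apply_mem_orbit {σ : Equiv.Perm X} (hσ : ∀ y : X, σ y ∈ orbit H y)
    (n : ℕ) (y : X) : (σ ^ n) y ∈ orbit H y := by
  induction n with
  | zero => exact mem_orbit_self y
  | succ n ih =>
    rw [pow_succ', Equiv.Perm.mul_apply, ← orbit_eq_iff.mpr ih]
    exact hσ _

theorem Equiv.Perm.eq_one_of_odd_orderOf_of_card_orbit_le_two [Finite X] {σ : Equiv.Perm X}
    (hσ : Odd (orderOf σ)) (horbit : ∀ y : X, σ y ∈ orbit H y)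
    (hcard : ∀ y : X, Nat.card (orbit H y) ≤ 2) : σ = 1 := by
  ext y
  have hsub : orbit (zpowers σ) y ⊆ orbit H y := by
    rintro _ ⟨⟨τ, hτ⟩, rfl⟩
    obtain ⟨n, rfl⟩ := mem_powers_iff_mem_zpowers.mpr hτ
    exact Equiv.Perm.pow_apply_mem_orbit horbit n y
  have hodd : Odd (Nat.card (orbit (zpowers σ) y)) := by
    refine hσ.of_dvd_nat ?_
    rw [← Nat.card_zpowers, Nat.card_coe_set_eq, ← index_stabilizer]
    exact index_dvd_card _
  have hle : Nat.card (orbit (zpowers σ) y) ≤ 2 :=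
    (Nat.card_mono (Set.toFinite _) hsub).trans (hcard y)
  have : Subsingleton (orbit (zpowers σ) y) := by
    rw [← Finite.card_le_one_iff_subsingleton]
    rcases hodd with ⟨k, hk⟩
    omega
  exact congrArg Subtype.val (Subsingleton.elim (⟨_, mem_orbit y ⟨σ, mem_zpowers σ⟩⟩ :
    orbit (zpowers σ) y) ⟨y, mem_orbit_self y⟩)

theorem card_orbit_le_two_of_isPGroup (hH : IsPGroup 2 H) (hX : Nat.card X = 3) (y : X) :
    Nat.card (orbit H y) ≤ 2 := by
  have : Finite X := Nat.finite_of_card_ne_zero (by omega)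
  obtain ⟨k, hk⟩ := hH.card_orbit y
  have hle : 2 ^ k ≤ 3 := hk ▸ hX ▸ Finite.card_subtype_le _
  have hk2 : k < 2 := by
    by_contra! h
    have := Nat.pow_le_pow_right two_pos h
    omega
  interval_cases k <;> omega

end OrbitCounting

theorem IsPGroup.of_forall_coprime_orderOf {G : Type*} [Group G] [Finite G] {p : ℕ}
    [hp : Fact p.Prime] (h : ∀ g : G, (orderOf g).Coprime p → g = 1) : IsPGroup p G := by
  rw [isPGroup_iff_primeFactors_card_subset hp.out.ne_zero, hp.out.primeFactors]
  intro q hq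
  obtain ⟨hqprime, hqG, -⟩ := Nat.mem_primeFactors.mp hq
  have : Fact q.Prime := ⟨hqprime⟩
  obtain ⟨g, hg⟩ := exists_prime_orderOf_dvd_card' q hqG
  by_contra hqp
  have hg1 := h g (hg ▸ (Nat.coprime_primes hqprime hp.out).mpr (by simpa using hqp))
  rw [hg1, orderOf_one] at hg
  exact hqprime.one_lt.ne hg

theorem IsSylowIn.card_quotient_eq {n : ℕ} {M : Type*} [Group M] [Finite M]
    (hM : Nat.card M = 3 * 2 ^ n) {P : Subgroup M} (hP : IsSylowIn 2 ⊤ P) :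
    Nat.card (M ⧸ P) = 3 := by
  obtain ⟨-, hP2, hmax⟩ := hP
  obtain ⟨S, hPS⟩ := hP2.exists_le_sylow
  have hcard : Nat.card P = 2 ^ n := by
    rw [← hmax S le_top S.isPGroup' hPS, S.card_eq_multiplicity, hM,
      Nat.factorization_mul (by norm_num) (by positivity)]
    simp [Nat.prime_two.factorization_self, Nat.factorization_eq_zero_of_not_dvd]
  have hindex := P.index_mul_card
  rw [hcard, hM] at hindex
  rw [← index_eq_card]
  exact Nat.eq_of_mul_eq_mul_right (by positivity) hindex

theorem parkGroup.eq_one_of_odd_orderOf {M : Type*} [Group M] [Finite M] {P Q : Subgroup M}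
    (hP : IsPGroup 2 P) (hX : Nat.card (M ⧸ P) = 3) (hQ : Q ≤ P.normalCore)
    (hC : IsPGroup 2 (centralizer (Q : Set M))) {g : parkGroup M P}
    (hg : g ∈ centralizer (Q.map (parkEmbed M P) : Set (parkGroup M P)))
    (hodd : Odd (orderOf g)) : g = 1 := by
  have hσ : cosetPerm g = 1 :=
    Equiv.Perm.eq_one_of_odd_orderOf_of_card_orbit_le_two (hodd.of_dvd_nat (orderOf_map_dvd _ _))
      (cosetPerm_mem_orbit_centralizer hQ hg) (card_orbit_le_two_of_isPGroup hC hX)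
  obtain ⟨k, hk⟩ := hP.exists_card_eq
  have hdvd : orderOf g ∣ 2 ^ k :=
    orderOf_dvd_of_pow_eq_one (hk ▸ pow_card_eq_one_of_cosetPerm_eq_one hσ)
  exact orderOf_eq_one_iff.mp ((Nat.coprime_two_right.mpr hodd).pow_right k |>.eq_one_of_dvd hdvd)

theorem statement16_general (n : ℕ)
    (M : Type*) [Group M] [Finite M] (hM : Nat.card M = 3 * 2 ^ n)
    (P : Subgroup M) (hsyl : IsSylowIn 2 ⊤ P)
    (Q : Subgroup M) (hQ : Q ≤ P.normalCore)
    (hCMQ : IsPGroup 2 (Subgroup.centralizer (Q : Set M))) :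
    IsPGroup 2 (Subgroup.centralizer
      ((Q.map (parkEmbed M P) : Subgroup ↥(parkGroup M P)) : Set ↥(parkGroup M P))) := by
  refine IsPGroup.of_forall_coprime_orderOf fun g hg => Subtype.ext ?_
  rw [← orderOf_coe, Nat.coprime_two_right] at hg
  exact parkGroup.eq_one_of_odd_orderOf hsyl.2.1 (hsyl.card_quotient_eq hM) hQ hCMQ g.2 hg

/-- let `M` be a finite group of order `3·2^n` (`n ≥ 3`) with no
non-trivial normal subgroup of odd order and with a non-normal Sylow `2`-subgroup
`P`, and let `G = Park(M, P)` with Park's embedding `ι`.  If `Q ≤ P` is contained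
in the normal core of `P` in `M` and `C_M(Q)` is a `2`-group, then `C_G(ι(Q))` is
a `2`-group. -/
theorem statement16 (n : ℕ) (hn : 3 ≤ n)
    (M : Type*) [Group M] [Finite M] (hM : Nat.card M = 3 * 2 ^ n)
    (hodd : ∀ K : Subgroup M, K.Normal → Odd (Nat.card K) → K = ⊥)
    (P : Subgroup M) (hsyl : IsSylowIn 2 ⊤ P) (hPnn : ¬ P.Normal)
    (Q : Subgroup M) (hQP : Q ≤ P) (hQ : Q ≤ P.normalCore)
    (hCMQ : IsPGroup 2 (Subgroup.centralizer (Q : Set M))) :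
    IsPGroup 2 (Subgroup.centralizer
      ((Q.map (parkEmbed M P) : Subgroup ↥(parkGroup M P)) : Set ↥(parkGroup M P))) :=
  statement16_general n M hM P hsyl Q hQ hCMQ
end
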